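/- Consider an instance of single-machine scheduling with one non-renewable resource in which every job has processing time p_j = 1 and resource requirement equal to its weight, a_j = w_j > 0, the jobs are indexed so that w_1 ≥ w_2 ≥ … ≥ w_n, and ∑_{j=1}^n w_j ≤ b_q. For each j let ℓ(j) := min{ℓ : ∑_{j'=1}^{j} w_{j'} ≤ b_ℓ}. Define the list schedule S by S_1 := u_{ℓ(1)} and S_j := max(S_{j−1} + 1, u_{ℓ(j)}) for j = 2, …, n. Then S is a feasible schedule, and for every feasible schedule S* it holds that ∑_{j=1}^n w_j·(S_j + 1) ≤ 3·∑_{j=1}^n w_j·(S*_j + 1); that is, scheduling the jobs in non-increasing weight order is a factor-3 approximation for minimizing ∑_j w_j C_j. -/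
import Mathlib

open Classical

/-- Cumulative supply over the first `ℓ+1` supplies (0-based indexing of supplies). -/
noncomputable def cumSupply (btilde : ℕ → ℝ) (ℓ : ℕ) : ℝ :=
  ∑ k ∈ Finset.range (ℓ + 1), btilde k

/-- List schedule in job order `0, 1, …` for unit processing times and resource
requirements `a_j = w_j`: job `j` starts at the maximum of the previous job's
completion time and `u (ℓ(j))`, where `ℓ(j)` is the first supply period whose
cumulative supply covers the total weight of the first `j+1` jobs. -/
noncomputable def wListSched (w u btilde : ℕ → ℝ) : ℕ → ℝ
  | 0 => u (sInf {ℓ : ℕ | w 0 ≤ cumSupply btilde ℓ})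
  | (j + 1) => max (wListSched w u btilde j + 1)
      (u (sInf {ℓ : ℕ | ∑ j' ∈ Finset.range (j + 2), w j' ≤ cumSupply btilde ℓ}))

/-- Feasibility of a schedule `S` of `n` unit-time jobs (indexed `0, …, n-1`) with
resource requirements equal to the weights `w`, and `q` supplies at dates
`u 0 < u 1 < …` delivering `btilde` units. -/
def FeasibleW (n q : ℕ) (w u btilde : ℕ → ℝ) (S : ℕ → ℝ) : Prop :=
  (∀ j, j < n → 0 ≤ S j) ∧
  (∀ j, j < n → ∀ j', j' < n → j ≠ j' → S j + 1 ≤ S j' ∨ S j' + 1 ≤ S j) ∧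
  (∀ t : ℝ, 0 ≤ t → ∀ ℓ, ℓ < q → u ℓ ≤ t →
    (∀ ℓ', ℓ' < q → u ℓ' ≤ t → ℓ' ≤ ℓ) →
    ∑ j ∈ (Finset.range n).filter (fun j => S j ≤ t), w j ≤ cumSupply btilde ℓ)

/-- Any subset of jobs has total weight at most that of the same number of
heaviest jobs (weights sorted non-increasingly). -/
lemma sum_subset_le_topk (n : ℕ) (w : ℕ → ℝ)
    (hsorted : ∀ i j, i ≤ j → j < n → w j ≤ w i) :
    ∀ (m : ℕ) (T : Finset ℕ), T ⊆ Finset.range n → T.card = m →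
      ∑ j ∈ T, w j ≤ ∑ j ∈ Finset.range m, w j := by
  intro m
  induction m with
  | zero => intro T hT hc; simp [Finset.card_eq_zero.mp hc]
  | succ m ih =>
    intro T hT hc
    have hne : T.Nonempty := Finset.card_pos.mp (by omega)
    set M := T.max' hne with hM
    have hMT : M ∈ T := T.max'_mem hne
    have hMn : M < n := Finset.mem_range.mp (hT hMT)
    have hsub : T ⊆ Finset.range (M+1) := fun x hx =>
      Finset.mem_range.mpr (Nat.lt_succ_of_le (T.le_max' x hx))
    have hcard : m + 1 ≤ M + 1 := by
      have := Finset.card_le_card hsub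
      rw [hc, Finset.card_range] at this
      exact this
    have hmM : m ≤ M := by omega
    have herase : (T.erase M).card = m := by rw [Finset.card_erase_of_mem hMT, hc]; omega
    have h1 := ih (T.erase M) ((Finset.erase_subset _ _).trans hT) herase
    have h2 : w M ≤ w m := hsorted m M hmM hMn
    calc ∑ j ∈ T, w j = ∑ j ∈ T.erase M, w j + w M := (Finset.sum_erase_add _ _ hMT).symm
      _ ≤ ∑ j ∈ Finset.range m, w j + w m := add_le_add h1 h2
      _ = ∑ j ∈ Finset.range (m+1), w j := (Finset.sum_range_succ _ _).symm

/-- Key counting lemma: if a set `T` of jobs has total weight at most `b`, then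
the total weight of jobs whose prefix sum exceeds `b` is at most twice the total
weight of the jobs outside `T`. -/
lemma key_two (n : ℕ) (w : ℕ → ℝ) (hw : ∀ j, j < n → 0 < w j)
    (hsorted : ∀ i j, i ≤ j → j < n → w j ≤ w i)
    (b : ℝ) (T : Finset ℕ) (hT : T ⊆ Finset.range n)
    (hTb : ∑ j ∈ T, w j ≤ b) :
    ∑ j ∈ (Finset.range n).filter (fun j => b < ∑ i ∈ Finset.range (j+1), w i), w j
      ≤ 2 * ∑ j ∈ Finset.range n \ T, w j := by
  have hwnn : ∀ j, j < n → 0 ≤ w j := fun j hj => (hw j hj).le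
  have hcompnn : (0:ℝ) ≤ ∑ j ∈ Finset.range n \ T, w j :=
    Finset.sum_nonneg (fun j hj => hwnn j (Finset.mem_range.mp (Finset.mem_sdiff.mp hj).1))
  by_cases hall : ∀ j, j < n → ∑ i ∈ Finset.range (j+1), w i ≤ b
  · have : (Finset.range n).filter (fun j => b < ∑ i ∈ Finset.range (j+1), w i) = ∅ := by
      apply Finset.filter_false_of_mem
      intro j hj
      exact not_lt.mpr (hall j (Finset.mem_range.mp hj))
    rw [this]; simpa using hcompnn
  · push_neg at hall
    set P := (Finset.range n).filter (fun j => ∑ i ∈ Finset.range (j+1), w i ≤ b) with hP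
    set J := P.card with hJ
    have hdc : ∀ i j, i ≤ j → j ∈ P → i ∈ P := by
      intro i j hij hjP
      rw [hP, Finset.mem_filter, Finset.mem_range] at hjP ⊢
      refine ⟨by omega, le_trans ?_ hjP.2⟩
      apply Finset.sum_le_sum_of_subset_of_nonneg
      · exact Finset.range_subset_range.mpr (by omega)
      · intro k hk _; exact hwnn k (by rw [Finset.mem_range] at hk; omega)
    have hPrange : P = Finset.range J := by
      have hsub : Finset.range J ⊆ P := by
        intro i hi
        rw [Finset.mem_range] at hi
        by_contra hiP
        have : P ⊆ Finset.range i := by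
          intro j hjP
          rw [Finset.mem_range]
          by_contra hji
          exact hiP (hdc i j (by omega) hjP)
        have := Finset.card_le_card this
        rw [Finset.card_range] at this; omega
      exact (Finset.eq_of_subset_of_card_le hsub (by rw [Finset.card_range, hJ])).symm
    have hJn : J < n := by
      obtain ⟨j0, hj0n, hj0⟩ := hall
      have : j0 ∉ P := by rw [hP, Finset.mem_filter]; push_neg; intro _; exact hj0
      rw [hPrange, Finset.mem_range] at this
      omega
    have hJP : J ∉ P := by rw [hPrange]; simp
    have hbJ : b < ∑ i ∈ Finset.range (J+1), w i := by
      rw [hP, Finset.mem_filter] at hJP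
      push_neg at hJP
      exact hJP (Finset.mem_range.mpr hJn)
    have hex : ∃ j0, j0 ≤ J ∧ j0 ∉ T := by
      by_contra h
      push_neg at h
      have hsub : Finset.range (J+1) ⊆ T := by
        intro i hi; exact h i (by rw [Finset.mem_range] at hi; omega)
      have : ∑ i ∈ Finset.range (J+1), w i ≤ ∑ j ∈ T, w j := by
        apply Finset.sum_le_sum_of_subset_of_nonneg hsub
        intro k hk _; exact hwnn k (Finset.mem_range.mp (hT hk))
      linarith
    obtain ⟨j0, hj0J, hj0T⟩ := hex
    have hj0n : j0 < n := by omega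
    have hj0mem : j0 ∈ Finset.range n \ T := Finset.mem_sdiff.mpr ⟨Finset.mem_range.mpr hj0n, hj0T⟩
    have hwj0 : w J ≤ w j0 := hsorted j0 J hj0J hJn
    have hcomp : w j0 ≤ ∑ j ∈ Finset.range n \ T, w j :=
      Finset.single_le_sum (fun j hj => hwnn j (Finset.mem_range.mp (Finset.mem_sdiff.mp hj).1)) hj0mem
    have hfilter : (Finset.range n).filter (fun j => b < ∑ i ∈ Finset.range (j+1), w i)
        = Finset.range n \ P := by
      rw [hP, ← Finset.filter_not]
      apply Finset.filter_congr
      intro j _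
      simp [not_le]
    rw [hfilter]
    have hPsub : P ⊆ Finset.range n := by rw [hP]; exact Finset.filter_subset _ _
    have hTsum : ∑ j ∈ Finset.range n \ T, w j = ∑ j ∈ Finset.range n, w j - ∑ j ∈ T, w j :=
      Finset.sum_sdiff_eq_sub hT
    have hPsum : ∑ j ∈ Finset.range n \ P, w j = ∑ j ∈ Finset.range n, w j - ∑ j ∈ P, w j :=
      Finset.sum_sdiff_eq_sub hPsub
    have hJsum : ∑ i ∈ Finset.range (J+1), w i = ∑ j ∈ P, w j + w J := by
      rw [hPrange, Finset.sum_range_succ]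
    rw [hPsum, hTsum]
    linarith

/-- Staircase bound: the weighted indicator sum of passed supply dates is at most
`s` (and at most `u m`). -/
lemma stair (q : ℕ) (u : ℕ → ℝ) (hu0 : u 0 = 0)
    (humono : ∀ ℓ, ℓ + 1 < q → u ℓ < u (ℓ + 1))
    (s : ℝ) (hs : 0 ≤ s) :
    ∀ m, m < q →
      (∑ ℓ ∈ Finset.range m, (u (ℓ+1) - u ℓ) * (if u (ℓ+1) ≤ s then (1:ℝ) else 0)) ≤ s ∧
      (∑ ℓ ∈ Finset.range m, (u (ℓ+1) - u ℓ) * (if u (ℓ+1) ≤ s then (1:ℝ) else 0)) ≤ u m := by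
  intro m
  induction m with
  | zero => intro _; simp [hu0]; exact hs
  | succ m ih =>
    intro hm
    obtain ⟨ih1, ih2⟩ := ih (by omega)
    have hmono : u m < u (m+1) := humono m hm
    rw [Finset.sum_range_succ]
    by_cases h : u (m+1) ≤ s
    · rw [if_pos h, mul_one]
      constructor <;> linarith
    · rw [if_neg h, mul_zero, add_zero]
      constructor <;> linarith

/-- In any feasible schedule, at most `k` jobs can start before time `k`. -/
lemma card_lt_bound (n : ℕ) (S : ℕ → ℝ) (hS0 : ∀ j, j < n → 0 ≤ S j)
    (hgap : ∀ j, j < n → ∀ j', j' < n → j ≠ j' → S j + 1 ≤ S j' ∨ S j' + 1 ≤ S j)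
    (c : ℝ) (k : ℕ) (hck : c ≤ (k:ℝ)) :
    ((Finset.range n).filter (fun j => S j < c)).card ≤ k := by
  set T := (Finset.range n).filter (fun j => S j < c) with hT
  have hmaps : ∀ j ∈ T, (⌊S j⌋).toNat ∈ Finset.range k := by
    intro j hj
    rw [hT, Finset.mem_filter, Finset.mem_range] at hj
    rw [Finset.mem_range]
    have h0 : 0 ≤ S j := hS0 j hj.1
    have h1 : S j < (k:ℝ) := lt_of_lt_of_le hj.2 hck
    have hfl : (0:ℤ) ≤ ⌊S j⌋ := Int.floor_nonneg.mpr h0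
    have hfu : ⌊S j⌋ < (k:ℤ) := by
      rw [Int.floor_lt]
      push_cast
      exact h1
    omega
  have hinj : ∀ j ∈ T, ∀ j' ∈ T, (⌊S j⌋).toNat = (⌊S j'⌋).toNat → j = j' := by
    intro j hj j' hj' heq
    by_contra hne
    rw [hT, Finset.mem_filter, Finset.mem_range] at hj hj'
    have h0 : 0 ≤ S j := hS0 j hj.1
    have h0' : 0 ≤ S j' := hS0 j' hj'.1
    have hfl : (0:ℤ) ≤ ⌊S j⌋ := Int.floor_nonneg.mpr h0
    have hfl' : (0:ℤ) ≤ ⌊S j'⌋ := Int.floor_nonneg.mpr h0'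
    have heq' : ⌊S j⌋ = ⌊S j'⌋ := by omega
    rcases hgap j hj.1 j' hj'.1 hne with h | h
    · have : ⌊S j⌋ + 1 ≤ ⌊S j'⌋ := by
        have := Int.floor_le_floor h
        rwa [Int.floor_add_one] at this
      omega
    · have : ⌊S j'⌋ + 1 ≤ ⌊S j⌋ := by
        have := Int.floor_le_floor h
        rwa [Int.floor_add_one] at this
      omega
  calc T.card ≤ (Finset.range k).card := Finset.card_le_card_of_injOn _ hmaps hinj
    _ = k := Finset.card_range k

/-- For unit processing times, `a_j = w_j > 0`, jobs indexed in
non-increasing weight order, and total weight at most the total supply, the list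
schedule in non-increasing weight order is feasible, and its total weighted
completion time is at most three times that of any feasible schedule. -/
theorem weight_order_three_approx (n q : ℕ) (hq : 1 ≤ q) (hn : 1 ≤ n)
    (w : ℕ → ℝ) (hw : ∀ j, j < n → 0 < w j)
    (hsorted : ∀ i j, i ≤ j → j < n → w j ≤ w i)
    (u btilde : ℕ → ℝ)
    (hu0 : u 0 = 0)
    (humono : ∀ ℓ, ℓ + 1 < q → u ℓ < u (ℓ + 1))
    (hbt : ∀ ℓ, ℓ < q → 0 < btilde ℓ)
    (htot : ∑ j ∈ Finset.range n, w j ≤ cumSupply btilde (q - 1)) :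
    FeasibleW n q w u btilde (wListSched w u btilde) ∧
    ∀ Sstar : ℕ → ℝ, FeasibleW n q w u btilde Sstar →
      ∑ j ∈ Finset.range n, w j * (wListSched w u btilde j + 1) ≤
        3 * ∑ j ∈ Finset.range n, w j * (Sstar j + 1) := by
  have hwnn : ∀ j, j < n → 0 ≤ w j := fun j hj => (hw j hj).le
  set Wc : ℕ → ℝ := fun j => ∑ i ∈ Finset.range (j+1), w i with hWc
  set L : ℕ → ℕ := fun j => sInf {ℓ : ℕ | Wc j ≤ cumSupply btilde ℓ} with hLdef
  set S : ℕ → ℝ := wListSched w u btilde with hSdef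
  have hbtnn : ∀ ℓ, ℓ < q → 0 ≤ btilde ℓ := fun ℓ hℓ => (hbt ℓ hℓ).le
  have hbmono : ∀ ℓ ℓ', ℓ ≤ ℓ' → ℓ' < q → cumSupply btilde ℓ ≤ cumSupply btilde ℓ' := by
    intro ℓ ℓ' h hq'
    apply Finset.sum_le_sum_of_subset_of_nonneg (Finset.range_subset_range.mpr (by omega))
    intro k hk _; exact hbtnn k (by rw [Finset.mem_range] at hk; omega)
  have hbpos : ∀ ℓ, ℓ < q → 0 < cumSupply btilde ℓ := by
    intro ℓ hℓ
    apply Finset.sum_pos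
    · intro k hk; exact hbt k (by rw [Finset.mem_range] at hk; omega)
    · exact Finset.nonempty_range_add_one
  have hWmono : ∀ i j, i ≤ j → j < n → Wc i ≤ Wc j := by
    intro i j hij hjn
    apply Finset.sum_le_sum_of_subset_of_nonneg (Finset.range_subset_range.mpr (by omega))
    intro k hk _; exact hwnn k (by rw [Finset.mem_range] at hk; omega)
  have hWtot : Wc (n-1) = ∑ j ∈ Finset.range n, w j := by
    have h : n - 1 + 1 = n := by omega
    rw [hWc]
    show ∑ i ∈ Finset.range (n-1+1), w i = _
    rw [h]
  have hmemq : ∀ j, j < n → q - 1 ∈ {ℓ : ℕ | Wc j ≤ cumSupply btilde ℓ} := by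
    intro j hj
    exact le_trans (hWmono j (n-1) (by omega) (by omega)) (hWtot ▸ htot)
  have hLle : ∀ j, j < n → L j ≤ q - 1 := fun j hj => Nat.sInf_le (hmemq j hj)
  have hLq : ∀ j, j < n → L j < q := fun j hj => by have := hLle j hj; omega
  have hLmem : ∀ j, j < n → Wc j ≤ cumSupply btilde (L j) := by
    intro j hj
    exact Nat.sInf_mem (⟨q-1, hmemq j hj⟩ : {ℓ : ℕ | Wc j ≤ cumSupply btilde ℓ}.Nonempty)
  have humono2 : ∀ ℓ ℓ', ℓ ≤ ℓ' → ℓ' < q → u ℓ ≤ u ℓ' := by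
    have key : ∀ d ℓ, ℓ + d < q → u ℓ ≤ u (ℓ + d) := by
      intro d
      induction d with
      | zero => intro ℓ _; simp
      | succ d ih =>
        intro ℓ hl
        calc u ℓ ≤ u (ℓ + d) := ih ℓ (by omega)
          _ ≤ u (ℓ + d + 1) := (humono (ℓ + d) (by omega)).le
    intro ℓ ℓ' h h'
    have := key (ℓ' - ℓ) ℓ (by omega)
    rwa [Nat.add_sub_cancel' h] at this
  have hu0le : ∀ ℓ, ℓ < q → 0 ≤ u ℓ := by
    intro ℓ hℓ
    have := humono2 0 ℓ (Nat.zero_le _) hℓ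
    rwa [hu0] at this
  have hLmono : ∀ j j', j ≤ j' → j' < n → L j ≤ L j' := by
    intro j j' hjj hj'
    exact Nat.sInf_le (le_trans (hWmono j j' hjj hj') (hLmem j' hj'))
  have hS0 : S 0 = u (L 0) := by
    rw [hSdef, hLdef]
    show wListSched w u btilde 0 = _
    rw [wListSched]
    congr 2
    ext ℓ
    simp [hWc, Finset.sum_range_one]
  have hSsucc : ∀ j, S (j+1) = max (S j + 1) (u (L (j+1))) := fun j => rfl
  have hstep : ∀ j, S j + 1 ≤ S (j+1) := fun j => (hSsucc j) ▸ le_max_left _ _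
  have hSlb : ∀ j, u (L j) ≤ S j := by
    intro j
    cases j with
    | zero => exact hS0.ge
    | succ j => exact (hSsucc j) ▸ le_max_right _ _
  have hSnn : ∀ j, j < n → 0 ≤ S j := fun j hj => le_trans (hu0le (L j) (hLq j hj)) (hSlb j)
  have hmonoS : ∀ (j d : ℕ), S j + (d:ℝ) ≤ S (j + d) := by
    intro j d
    induction d with
    | zero => simp
    | succ d ih =>
      push_cast
      calc S j + ((d:ℝ) + 1) = (S j + d) + 1 := by ring
        _ ≤ S (j + d) + 1 := by linarith
        _ ≤ S (j + d + 1) := hstep _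
  have hgap : ∀ j j', j < j' → S j + 1 ≤ S j' := by
    intro j j' hjj
    have h1 := hmonoS j (j' - j)
    have h2 : (1:ℝ) ≤ ((j' - j : ℕ) : ℝ) := by
      have : 1 ≤ j' - j := by omega
      exact_mod_cast this
    have h3 : j + (j' - j) = j' := by omega
    rw [h3] at h1
    linarith
  have hdisj : ∀ j, j < n → ∀ j', j' < n → j ≠ j' → S j + 1 ≤ S j' ∨ S j' + 1 ≤ S j := by
    intro j _ j' _ hne
    rcases lt_or_gt_of_ne hne with h | h
    · exact Or.inl (hgap j j' h)
    · exact Or.inr (hgap j' j h)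
  have hub : ∀ j, j < n → S j ≤ u (L j) + j := by
    intro j
    induction j with
    | zero => intro _; rw [hS0]; simp
    | succ j ih =>
      intro hj
      have hLj : L j ≤ L (j+1) := hLmono j (j+1) (by omega) hj
      have huL : u (L j) ≤ u (L (j+1)) := humono2 _ _ hLj (hLq (j+1) hj)
      have h1 := ih (by omega)
      rw [hSsucc]
      apply max_le
      · push_cast; linarith
      · have : (0:ℝ) ≤ ((j:ℝ) + 1) := by positivity
        push_cast; linarith
  have feas3 : ∀ t : ℝ, 0 ≤ t → ∀ ℓ, ℓ < q → u ℓ ≤ t →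
      (∀ ℓ', ℓ' < q → u ℓ' ≤ t → ℓ' ≤ ℓ) →
      ∑ j ∈ (Finset.range n).filter (fun j => S j ≤ t), w j ≤ cumSupply btilde ℓ := by
    intro t ht ℓ hℓ hut hmax
    set F := (Finset.range n).filter (fun j => S j ≤ t) with hF
    rcases F.eq_empty_or_nonempty with he | hne
    · rw [he]; simp; exact (hbpos ℓ hℓ).le
    · set m := F.max' hne with hm
      have hmF : m ∈ F := F.max'_mem hne
      rw [hF, Finset.mem_filter, Finset.mem_range] at hmF
      have hmn : m < n := hmF.1
      have hLm : L m ≤ ℓ := hmax (L m) (hLq m hmn) (le_trans (hSlb m) hmF.2)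
      have hsub : F ⊆ Finset.range (m+1) := by
        intro x hx
        exact Finset.mem_range.mpr (Nat.lt_succ_of_le (F.le_max' x hx))
      calc ∑ j ∈ F, w j ≤ ∑ j ∈ Finset.range (m+1), w j := by
            apply Finset.sum_le_sum_of_subset_of_nonneg hsub
            intro k hk _
            exact hwnn k (by rw [Finset.mem_range] at hk; omega)
        _ = Wc m := rfl
        _ ≤ cumSupply btilde (L m) := hLmem m hmn
        _ ≤ cumSupply btilde ℓ := hbmono _ _ hLm hℓ
  refine ⟨⟨hSnn, hdisj, feas3⟩, ?_⟩
  rintro Sstar ⟨hsnn, hsdisj, hsres⟩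
  -- Step B: positional lower bound
  have stepB : ∑ j ∈ Finset.range n, w j * (j:ℝ) ≤ ∑ j ∈ Finset.range n, w j * Sstar j := by
    have hBk : ∀ k ∈ Finset.Icc 1 (n-1),
        ∑ j ∈ (Finset.range n).filter (fun j => k ≤ j), w j ≤
        ∑ j ∈ (Finset.range n).filter (fun j => (k:ℝ) ≤ Sstar j), w j := by
      intro k hk
      rw [Finset.mem_Icc] at hk
      have hkn : k ≤ n - 1 := hk.2
      have h1 : ∑ j ∈ (Finset.range n).filter (fun j => Sstar j < (k:ℝ)), w j
          ≤ ∑ j ∈ Finset.range k, w j := by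
        have hcard := card_lt_bound n Sstar hsnn hsdisj (k:ℝ) k le_rfl
        calc ∑ j ∈ (Finset.range n).filter (fun j => Sstar j < (k:ℝ)), w j
            ≤ ∑ j ∈ Finset.range (((Finset.range n).filter (fun j => Sstar j < (k:ℝ))).card), w j :=
              sum_subset_le_topk n w hsorted _ _ (Finset.filter_subset _ _) rfl
          _ ≤ ∑ j ∈ Finset.range k, w j := by
              apply Finset.sum_le_sum_of_subset_of_nonneg (Finset.range_subset_range.mpr hcard)
              intro i hi _
              exact hwnn i (by rw [Finset.mem_range] at hi; omega)
      have e1 : ∑ j ∈ (Finset.range n).filter (fun j => k ≤ j), w j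
            + ∑ j ∈ Finset.range k, w j = ∑ j ∈ Finset.range n, w j := by
        have hnotf : (Finset.range n).filter (fun j => ¬ k ≤ j) = Finset.range k := by
          ext x
          simp only [Finset.mem_filter, Finset.mem_range, not_le]
          omega
        rw [← hnotf]
        exact Finset.sum_filter_add_sum_filter_not _ _ _
      have e2 : ∑ j ∈ (Finset.range n).filter (fun j => (k:ℝ) ≤ Sstar j), w j
            + ∑ j ∈ (Finset.range n).filter (fun j => Sstar j < (k:ℝ)), w j
            = ∑ j ∈ Finset.range n, w j := by
        have hnotf : (Finset.range n).filter (fun j => ¬ (k:ℝ) ≤ Sstar j)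
            = (Finset.range n).filter (fun j => Sstar j < (k:ℝ)) := by
          apply Finset.filter_congr
          intro j _
          simp [not_le]
        rw [← hnotf]
        exact Finset.sum_filter_add_sum_filter_not _ _ _
      linarith
    have expand : ∀ j ∈ Finset.range n, w j * (j:ℝ)
        = ∑ k ∈ Finset.Icc 1 (n-1), (if k ≤ j then w j else 0) := by
      intro j hj
      rw [Finset.mem_range] at hj
      rw [← Finset.sum_filter]
      have hf : (Finset.Icc 1 (n-1)).filter (fun k => k ≤ j) = Finset.Icc 1 j := by
        ext x
        simp only [Finset.mem_filter, Finset.mem_Icc]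
        omega
      rw [hf, Finset.sum_const, Nat.card_Icc, nsmul_eq_mul]
      have : j + 1 - 1 = j := by omega
      rw [this, mul_comm]
    have lhs_eq : ∑ j ∈ Finset.range n, w j * (j:ℝ)
        = ∑ k ∈ Finset.Icc 1 (n-1), ∑ j ∈ (Finset.range n).filter (fun j => k ≤ j), w j := by
      rw [Finset.sum_congr rfl expand, Finset.sum_comm]
      exact Finset.sum_congr rfl (fun k _ => (Finset.sum_filter _ _).symm)
    have rhs_ge : ∑ k ∈ Finset.Icc 1 (n-1),
        ∑ j ∈ (Finset.range n).filter (fun j => (k:ℝ) ≤ Sstar j), w j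
        ≤ ∑ j ∈ Finset.range n, w j * Sstar j := by
      have hswap : ∑ k ∈ Finset.Icc 1 (n-1),
          ∑ j ∈ (Finset.range n).filter (fun j => (k:ℝ) ≤ Sstar j), w j
          = ∑ j ∈ Finset.range n, ∑ k ∈ Finset.Icc 1 (n-1),
              (if (k:ℝ) ≤ Sstar j then w j else 0) := by
        rw [Finset.sum_comm]
        exact Finset.sum_congr rfl (fun k _ => Finset.sum_filter _ _)
      rw [hswap]
      apply Finset.sum_le_sum
      intro j hj
      rw [Finset.mem_range] at hj
      have hsj : 0 ≤ Sstar j := hsnn j hj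
      have h0 : (0:ℤ) ≤ ⌊Sstar j⌋ := Int.floor_nonneg.mpr hsj
      set K := (⌊Sstar j⌋).toNat with hK
      have hKle : (K:ℝ) ≤ Sstar j := by
        have h2 : ((K:ℤ):ℝ) ≤ Sstar j := by
          rw [hK, Int.toNat_of_nonneg h0]
          exact Int.floor_le _
        exact_mod_cast h2
      have hsub : (Finset.Icc 1 (n-1)).filter (fun k : ℕ => (k:ℝ) ≤ Sstar j) ⊆ Finset.Icc 1 K := by
        intro k hk
        rw [Finset.mem_filter, Finset.mem_Icc] at hk
        rw [Finset.mem_Icc]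
        refine ⟨hk.1.1, ?_⟩
        have hik : (k:ℤ) ≤ ⌊Sstar j⌋ := Int.le_floor.mpr (by exact_mod_cast hk.2)
        omega
      have hcard : ((Finset.Icc 1 (n-1)).filter (fun k : ℕ => (k:ℝ) ≤ Sstar j)).card ≤ K := by
        have := Finset.card_le_card hsub
        rwa [Nat.card_Icc, Nat.add_sub_cancel] at this
      rw [← Finset.sum_filter, Finset.sum_const, nsmul_eq_mul]
      have hcR : (((Finset.Icc 1 (n-1)).filter (fun k : ℕ => (k:ℝ) ≤ Sstar j)).card : ℝ) ≤ Sstar j :=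
        le_trans (le_trans (by exact_mod_cast hcard) hKle) le_rfl
      calc (((Finset.Icc 1 (n-1)).filter (fun k : ℕ => (k:ℝ) ≤ Sstar j)).card : ℝ) * w j
          ≤ Sstar j * w j := mul_le_mul_of_nonneg_right hcR (hwnn j hj)
        _ = w j * Sstar j := mul_comm _ _
    calc ∑ j ∈ Finset.range n, w j * (j:ℝ)
        = ∑ k ∈ Finset.Icc 1 (n-1), ∑ j ∈ (Finset.range n).filter (fun j => k ≤ j), w j := lhs_eq
      _ ≤ ∑ k ∈ Finset.Icc 1 (n-1),
          ∑ j ∈ (Finset.range n).filter (fun j => (k:ℝ) ≤ Sstar j), w j :=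
            Finset.sum_le_sum hBk
      _ ≤ ∑ j ∈ Finset.range n, w j * Sstar j := rhs_ge
  -- Step C
  have stepC : ∑ j ∈ Finset.range n, w j * u (L j) ≤ 2 * ∑ j ∈ Finset.range n, w j * Sstar j := by
    have hAB : ∀ ℓ ∈ Finset.range (q-1),
        ∑ j ∈ (Finset.range n).filter (fun j => ℓ < L j), w j
          ≤ 2 * ∑ j ∈ (Finset.range n).filter (fun j => u (ℓ+1) ≤ Sstar j), w j := by
      intro ℓ hℓ
      rw [Finset.mem_range] at hℓ
      have hℓq : ℓ < q := by omega
      have hℓ1q : ℓ + 1 < q := by omega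
      set T := (Finset.range n).filter (fun j => Sstar j < u (ℓ+1)) with hT
      set t := (insert (u ℓ) (T.image Sstar)).max' (Finset.insert_nonempty _ _) with ht
      have hut : u ℓ ≤ t := Finset.le_max' _ _ (Finset.mem_insert_self _ _)
      have ht0 : 0 ≤ t := le_trans (hu0le ℓ hℓq) hut
      have htlt : t < u (ℓ+1) := by
        have hmem := Finset.max'_mem (insert (u ℓ) (T.image Sstar)) (Finset.insert_nonempty _ _)
        rw [← ht] at hmem
        rcases Finset.mem_insert.mp hmem with h | h
        · rw [h]; exact humono ℓ hℓ1q
        · obtain ⟨j, hjT, hjt⟩ := Finset.mem_image.mp h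
          rw [hT, Finset.mem_filter] at hjT
          rw [← hjt]; exact hjT.2
      have hmaxp : ∀ ℓ', ℓ' < q → u ℓ' ≤ t → ℓ' ≤ ℓ := by
        intro ℓ' hℓ' hu'
        by_contra hc
        push_neg at hc
        have : u (ℓ+1) ≤ u ℓ' := humono2 (ℓ+1) ℓ' (by omega) hℓ'
        linarith
      have hres := hsres t ht0 ℓ hℓq hut hmaxp
      have hTsub : T ⊆ (Finset.range n).filter (fun j => Sstar j ≤ t) := by
        intro j hj
        have hj' := hj
        rw [hT, Finset.mem_filter] at hj'
        rw [Finset.mem_filter]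
        refine ⟨hj'.1, ?_⟩
        exact Finset.le_max' _ _ (Finset.mem_insert_of_mem (Finset.mem_image_of_mem _ hj))
      have hTb : ∑ j ∈ T, w j ≤ cumSupply btilde ℓ := by
        refine le_trans ?_ hres
        apply Finset.sum_le_sum_of_subset_of_nonneg hTsub
        intro k hk _
        exact hwnn k (Finset.mem_range.mp (Finset.mem_filter.mp hk).1)
      have hkey := key_two n w hw hsorted (cumSupply btilde ℓ) T
        (by rw [hT]; exact Finset.filter_subset _ _) hTb
      have hAset : (Finset.range n).filter (fun j => ℓ < L j)
          = (Finset.range n).filter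
              (fun j => cumSupply btilde ℓ < ∑ i ∈ Finset.range (j+1), w i) := by
        apply Finset.filter_congr
        intro j hj
        rw [Finset.mem_range] at hj
        constructor
        · intro h
          by_contra hc
          push_neg at hc
          have : L j ≤ ℓ := Nat.sInf_le hc
          omega
        · intro h
          by_contra hc
          push_neg at hc
          have hle := le_trans (hLmem j hj) (hbmono (L j) ℓ hc hℓq)
          exact absurd hle (not_le.mpr h)
      have hBset : Finset.range n \ T = (Finset.range n).filter (fun j => u (ℓ+1) ≤ Sstar j) := by
        rw [hT, ← Finset.filter_not]
        apply Finset.filter_congr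
        intro j _
        simp [not_lt]
      rw [hAset, ← hBset]
      exact hkey
    have hUeq : ∑ j ∈ Finset.range n, w j * u (L j)
        = ∑ ℓ ∈ Finset.range (q-1), (u (ℓ+1) - u ℓ)
            * ∑ j ∈ (Finset.range n).filter (fun j => ℓ < L j), w j := by
      have per_j : ∀ j ∈ Finset.range n, w j * u (L j)
          = ∑ ℓ ∈ Finset.range (q-1), (if ℓ < L j then (u (ℓ+1) - u ℓ) * w j else 0) := by
        intro j hj
        rw [Finset.mem_range] at hj
        have hfilt : (Finset.range (q-1)).filter (fun ℓ => ℓ < L j) = Finset.range (L j) := by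
          ext x
          simp only [Finset.mem_filter, Finset.mem_range]
          have := hLle j hj
          omega
        rw [← Finset.sum_filter, hfilt, ← Finset.sum_mul, Finset.sum_range_sub u, hu0]
        ring
      rw [Finset.sum_congr rfl per_j, Finset.sum_comm]
      apply Finset.sum_congr rfl
      intro ℓ _
      rw [Finset.mul_sum, ← Finset.sum_filter]
    have hSlow : ∑ ℓ ∈ Finset.range (q-1), (u (ℓ+1) - u ℓ)
          * ∑ j ∈ (Finset.range n).filter (fun j => u (ℓ+1) ≤ Sstar j), w j
        ≤ ∑ j ∈ Finset.range n, w j * Sstar j := by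
      have hswap : ∑ ℓ ∈ Finset.range (q-1), (u (ℓ+1) - u ℓ)
            * ∑ j ∈ (Finset.range n).filter (fun j => u (ℓ+1) ≤ Sstar j), w j
          = ∑ j ∈ Finset.range n, ∑ ℓ ∈ Finset.range (q-1),
              (if u (ℓ+1) ≤ Sstar j then (u (ℓ+1) - u ℓ) * w j else 0) := by
        rw [Finset.sum_comm]
        apply Finset.sum_congr rfl
        intro ℓ _
        rw [Finset.mul_sum, ← Finset.sum_filter]
      rw [hswap]
      apply Finset.sum_le_sum
      intro j hj
      rw [Finset.mem_range] at hj
      have hst := (stair q u hu0 humono (Sstar j) (hsnn j hj) (q-1) (by omega)).1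
      have heq : ∑ ℓ ∈ Finset.range (q-1), (if u (ℓ+1) ≤ Sstar j then (u (ℓ+1) - u ℓ) * w j else 0)
          = (∑ ℓ ∈ Finset.range (q-1), (u (ℓ+1) - u ℓ) * (if u (ℓ+1) ≤ Sstar j then (1:ℝ) else 0))
              * w j := by
        rw [Finset.sum_mul]
        apply Finset.sum_congr rfl
        intro ℓ _
        by_cases h : u (ℓ+1) ≤ Sstar j <;> simp [h]
      rw [heq]
      calc _ ≤ Sstar j * w j := mul_le_mul_of_nonneg_right hst (hwnn j hj)
        _ = w j * Sstar j := mul_comm _ _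
    rw [hUeq]
    calc ∑ ℓ ∈ Finset.range (q-1), (u (ℓ+1) - u ℓ)
            * ∑ j ∈ (Finset.range n).filter (fun j => ℓ < L j), w j
        ≤ ∑ ℓ ∈ Finset.range (q-1), (u (ℓ+1) - u ℓ)
            * (2 * ∑ j ∈ (Finset.range n).filter (fun j => u (ℓ+1) ≤ Sstar j), w j) := by
          apply Finset.sum_le_sum
          intro ℓ hℓ
          have hℓ' : ℓ + 1 < q := by rw [Finset.mem_range] at hℓ; omega
          exact mul_le_mul_of_nonneg_left (hAB ℓ hℓ) (by linarith [humono ℓ hℓ'])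
      _ = 2 * ∑ ℓ ∈ Finset.range (q-1), (u (ℓ+1) - u ℓ)
            * ∑ j ∈ (Finset.range n).filter (fun j => u (ℓ+1) ≤ Sstar j), w j := by
          rw [Finset.mul_sum]
          apply Finset.sum_congr rfl
          intro ℓ _
          ring
      _ ≤ 2 * ∑ j ∈ Finset.range n, w j * Sstar j := by linarith
  -- combine
  have h3eq : ∑ j ∈ Finset.range n, w j * (Sstar j + 1)
      = ∑ j ∈ Finset.range n, w j * Sstar j + ∑ j ∈ Finset.range n, w j := by
    rw [← Finset.sum_add_distrib]
    exact Finset.sum_congr rfl (fun j _ => by ring)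
  have hWtotnn : (0:ℝ) ≤ ∑ j ∈ Finset.range n, w j :=
    Finset.sum_nonneg (fun j hj => hwnn j (Finset.mem_range.mp hj))
  have h1 : ∑ j ∈ Finset.range n, w j * (S j + 1)
      ≤ ∑ j ∈ Finset.range n, (w j * u (L j) + (w j * j + w j)) := by
    apply Finset.sum_le_sum
    intro j hj
    rw [Finset.mem_range] at hj
    nlinarith [hub j hj, hwnn j hj]
  have h2 : ∑ j ∈ Finset.range n, (w j * u (L j) + (w j * j + w j))
      = ∑ j ∈ Finset.range n, w j * u (L j)
        + (∑ j ∈ Finset.range n, w j * j + ∑ j ∈ Finset.range n, w j) := by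
    rw [Finset.sum_add_distrib, Finset.sum_add_distrib]
  linarith
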